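/- Let 1 < p ≤ ∞ and 1 ≤ q ≤ ∞. The functional ‖·‖_{p,q} built from the maximal rearrangement f** satisfies the triangle inequality: for all measurable functions f and g on (E, μ), ‖f + g‖_{p,q} ≤ ‖f‖_{p,q} + ‖g‖_{p,q} (so that ‖·‖_{p,q} is a norm on L(p,q)). -/

import Mathlib

open MeasureTheory Set ENNReal Filter

noncomputable section

/-- The distribution function `μ_f(λ) = μ {x : |f x| > λ}`. -/
def distrib {E : Type*} [MeasurableSpace E] (μ : Measure E) (f : E → ℂ) (lam : ℝ≥0∞) : ℝ≥0∞ :=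
  μ {x | lam < (‖f x‖₊ : ℝ≥0∞)}

/-- The non-increasing rearrangement `f*(t) = inf {λ ≥ 0 : μ_f(λ) ≤ t}`. -/
def rearr {E : Type*} [MeasurableSpace E] (μ : Measure E) (f : E → ℂ) (t : ℝ≥0∞) : ℝ≥0∞ :=
  sInf {lam : ℝ≥0∞ | distrib μ f lam ≤ t}

/-- The Lorentz quasi-norm `‖f‖*_{p,q}`: for `q < ∞` it is
`(∫_0^∞ (t^{1/p} f*(t))^q dt/t)^{1/q}`, and for `q = ∞` it is `sup_{t>0} t^{1/p} f*(t)`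
(with the convention `1/∞ = 0` for the exponent `1/p`). -/
def lorentzQ {E : Type*} [MeasurableSpace E] (μ : Measure E) (f : E → ℂ)
    (p q : ℝ≥0∞) : ℝ≥0∞ :=
  if q = ∞ then
    ⨆ (t : ℝ) (_ : 0 < t), ENNReal.ofReal t ^ p⁻¹.toReal * rearr μ f (ENNReal.ofReal t)
  else
    (∫⁻ t in Ioi (0 : ℝ),
        (ENNReal.ofReal t ^ p⁻¹.toReal * rearr μ f (ENNReal.ofReal t)) ^ q.toReal
          / ENNReal.ofReal t) ^ (1 / q.toReal)

/-- The maximal rearrangement `f**(t) = (1/t) ∫_0^t f*(u) du`. -/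
def maxRearr {E : Type*} [MeasurableSpace E] (μ : Measure E) (f : E → ℂ) (t : ℝ) : ℝ≥0∞ :=
  (∫⁻ u in Ioo (0 : ℝ) t, rearr μ f (ENNReal.ofReal u)) / ENNReal.ofReal t

/-- The Lorentz norm `‖f‖_{p,q}`, defined as `‖f‖*_{p,q}` but with the maximal
rearrangement `f**` in place of `f*`. -/
def lorentzN {E : Type*} [MeasurableSpace E] (μ : Measure E) (f : E → ℂ)
    (p q : ℝ≥0∞) : ℝ≥0∞ :=
  if q = ∞ then
    ⨆ (t : ℝ) (_ : 0 < t), ENNReal.ofReal t ^ p⁻¹.toReal * maxRearr μ f t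
  else
    (∫⁻ t in Ioi (0 : ℝ),
        (ENNReal.ofReal t ^ p⁻¹.toReal * maxRearr μ f t) ^ q.toReal
          / ENNReal.ofReal t) ^ (1 / q.toReal)

/-!
The proof rests on the formula
`∫₀ᵗ f* = f*(t) t + ∫ (|f| - f*(t))₊ dμ = min_{λ ≥ 0} (λ t + ∫ (|f| - λ)₊ dμ)`,
which follows from the two layer-cake identities `∫₀ᵗ f* = ∫₀^∞ min(t, μ_f(s)) ds` and
`∫_λ^∞ μ_f(s) ds = ∫ (|f| - λ)₊ dμ` by splitting the `s`-integral at `λ`. The right-hand side is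
subadditive in `f` (take `λ = f*(t) + g*(t)` for `f + g`), hence so is `f ↦ f**(t)`, and the
triangle inequality follows from Minkowski's inequality in `L^q(dt/t)` (or directly for `q = ∞`).
-/

lemma volume_restrict_Ioi_setOf_ofReal_lt (c : ℝ≥0∞) :
    volume.restrict (Ioi (0 : ℝ)) {s | ENNReal.ofReal s < c} = c := by
  rw [Measure.restrict_apply (measurableSet_lt ENNReal.measurable_ofReal measurable_const)]
  rcases eq_or_ne c ∞ with rfl | hc
  · simp
  · have : {s : ℝ | ENNReal.ofReal s < c} ∩ Ioi 0 = Ioo 0 c.toReal := by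
      ext s
      simp only [mem_inter_iff, mem_ofPred_eq, mem_Ioi, mem_Ioo]
      exact ⟨fun ⟨hl, hr⟩ => ⟨hr, (ENNReal.ofReal_lt_iff_lt_toReal hr.le hc).mp hl⟩,
        fun ⟨hl, hr⟩ => ⟨(ENNReal.ofReal_lt_iff_lt_toReal hl.le hc).mpr hr, hl⟩⟩
    rw [this, Real.volume_Ioo, sub_zero, ENNReal.ofReal_toReal hc]

theorem lintegral_eq_lintegral_meas_ofReal_lt {α : Type*} [MeasurableSpace α] (ν : Measure α)
    [SFinite ν] {G : α → ℝ≥0∞} (hG : Measurable G) :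
    ∫⁻ x, G x ∂ν = ∫⁻ s in Ioi 0, ν {x | ENNReal.ofReal s < G x} := by
  have hS : MeasurableSet {p : α × ℝ | ENNReal.ofReal p.2 < G p.1} :=
    measurableSet_lt (ENNReal.measurable_ofReal.comp measurable_snd) (hG.comp measurable_fst)
  calc ∫⁻ x, G x ∂ν = ∫⁻ x, volume.restrict (Ioi (0 : ℝ)) {s | ENNReal.ofReal s < G x} ∂ν := by
        simp only [volume_restrict_Ioi_setOf_ofReal_lt]
    _ = (ν.prod (volume.restrict (Ioi 0))) {p | ENNReal.ofReal p.2 < G p.1} :=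
        (Measure.prod_apply hS).symm
    _ = _ := Measure.prod_apply_symm hS

lemma lintegral_Ioi_min_le (c : ℝ≥0∞) (φ : ℝ → ℝ≥0∞) {lam : ℝ} (hlam : 0 ≤ lam) :
    ∫⁻ s in Ioi 0, min c (φ s) ≤ ENNReal.ofReal lam * c + ∫⁻ s in Ioi lam, φ s := by
  rw [← Ioc_union_Ioi_eq_Ioi hlam, lintegral_union measurableSet_Ioi (Ioc_disjoint_Ioi le_rfl)]
  gcongr
  · calc ∫⁻ s in Ioc 0 lam, min c (φ s) ≤ ∫⁻ _ in Ioc 0 lam, c :=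
          lintegral_mono fun _ => min_le_left _ _
      _ = ENNReal.ofReal lam * c := by
          rw [setLIntegral_const, Real.volume_Ioc, sub_zero, mul_comm]
  · exact min_le_right _ _

lemma lintegral_Ioi_min_eq (c : ℝ≥0∞) (φ : ℝ → ℝ≥0∞) {lam : ℝ} (hlam : 0 ≤ lam)
    (hlt : ∀ s ∈ Ioo 0 lam, c ≤ φ s) (hgt : ∀ s ∈ Ioi lam, φ s ≤ c) :
    ∫⁻ s in Ioi 0, min c (φ s) = ENNReal.ofReal lam * c + ∫⁻ s in Ioi lam, φ s := by
  rw [← Ioc_union_Ioi_eq_Ioi hlam, lintegral_union measurableSet_Ioi (Ioc_disjoint_Ioi le_rfl),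
    ← setLIntegral_congr Ioo_ae_eq_Ioc,
    setLIntegral_congr_fun measurableSet_Ioo fun s hs => min_eq_left (hlt s hs),
    setLIntegral_congr_fun measurableSet_Ioi fun s hs => min_eq_right (hgt s hs),
    setLIntegral_const, Real.volume_Ioo, sub_zero, mul_comm]

theorem lintegral_Ioi_rpow_div_le_add {q : ℝ} (hq : 1 ≤ q) {F G H : ℝ → ℝ≥0∞}
    (hF : Measurable F) (hG : Measurable G) (hH : ∀ t > 0, H t ≤ F t + G t) :
    (∫⁻ t in Ioi 0, H t ^ q / ENNReal.ofReal t) ^ (1 / q)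
      ≤ (∫⁻ t in Ioi 0, F t ^ q / ENNReal.ofReal t) ^ (1 / q)
        + (∫⁻ t in Ioi 0, G t ^ q / ENNReal.ofReal t) ^ (1 / q) := by
  set ν := (volume.restrict (Ioi (0 : ℝ))).withDensity fun t => (ENNReal.ofReal t)⁻¹
  have hν : ∀ K : ℝ → ℝ≥0∞, Measurable K →
      ∫⁻ t in Ioi 0, K t ^ q / ENNReal.ofReal t = ∫⁻ t, K t ^ q ∂ν := fun K hK => by
    rw [lintegral_withDensity_eq_lintegral_mul _ (by fun_prop) (by fun_prop)]
    simp only [Pi.mul_apply, div_eq_mul_inv, mul_comm]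
  have hmono : ∫⁻ t in Ioi 0, H t ^ q / ENNReal.ofReal t
      ≤ ∫⁻ t in Ioi 0, (F t + G t) ^ q / ENNReal.ofReal t :=
    setLIntegral_mono' measurableSet_Ioi fun t ht => by
      gcongr
      exact hH t ht
  calc (∫⁻ t in Ioi 0, H t ^ q / ENNReal.ofReal t) ^ (1 / q)
      ≤ (∫⁻ t, (F + G) t ^ q ∂ν) ^ (1 / q) :=
        ENNReal.rpow_le_rpow (hmono.trans_eq (hν _ (hF.add hG))) (by positivity)
    _ ≤ _ := by
        rw [hν F hF, hν G hG]
        exact ENNReal.lintegral_Lp_add_le hF.aemeasurable hG.aemeasurable hq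

section Rearrangement

variable {E : Type*} [MeasurableSpace E] (μ : Measure E)

lemma distrib_antitone (f : E → ℂ) : Antitone (distrib μ f) :=
  fun _ _ hab => measure_mono fun _ hx => lt_of_le_of_lt hab hx

lemma distrib_le_of_forall_gt (f : E → ℂ) {s u : ℝ≥0∞} (h : ∀ r, s < r → distrib μ f r ≤ u) :
    distrib μ f s ≤ u := by
  rcases eq_or_ne s ∞ with rfl | hs
  · simp [distrib]
  obtain ⟨r, hr_anti, hr_mem, hr_lim⟩ := exists_seq_strictAnti_tendsto' hs.lt_top
  have hunion : {x | s < ‖f x‖ₑ} = ⋃ n, {x | r n < ‖f x‖ₑ} := by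
    ext x
    simp only [mem_ofPred_eq, mem_iUnion]
    exact ⟨fun hx => (hr_lim.eventually (gt_mem_nhds hx)).exists,
      fun ⟨n, hn⟩ => (hr_mem n).1.trans hn⟩
  have hmono : Monotone fun n => {x | r n < ‖f x‖ₑ} :=
    fun m n hmn x hx => (hr_anti.antitone hmn).trans_lt hx
  calc distrib μ f s = ⨆ n, distrib μ f (r n) := (congrArg μ hunion).trans hmono.measure_iUnion
    _ ≤ u := iSup_le fun n => h _ (hr_mem n).1

lemma rearr_le_iff (f : E → ℂ) {u s : ℝ≥0∞} : rearr μ f u ≤ s ↔ distrib μ f s ≤ u := by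
  refine ⟨fun h => distrib_le_of_forall_gt μ f fun r hr => ?_, fun h => sInf_le h⟩
  obtain ⟨lam, hlam, hlt⟩ := sInf_lt_iff.mp (h.trans_lt hr)
  exact (distrib_antitone μ f hlt.le).trans hlam

lemma lt_rearr_iff (f : E → ℂ) {u s : ℝ≥0∞} : s < rearr μ f u ↔ u < distrib μ f s := by
  simpa only [not_le] using (rearr_le_iff μ f).not

lemma rearr_antitone (f : E → ℂ) : Antitone (rearr μ f) :=
  fun _ _ hab => sInf_le_sInf fun _ hl => hl.trans hab

theorem setLIntegral_rearr_eq_lintegral_min_distrib (f : E → ℂ) (t : ℝ) :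
    ∫⁻ u in Ioo 0 t, rearr μ f (ENNReal.ofReal u)
      = ∫⁻ s in Ioi 0, min (ENNReal.ofReal t) (distrib μ f (ENNReal.ofReal s)) := by
  have hmeas : Measurable fun u : ℝ => rearr μ f (ENNReal.ofReal u) :=
    (rearr_antitone μ f).comp_monotone (fun _ _ h => ENNReal.ofReal_le_ofReal h) |>.measurable
  rw [lintegral_eq_lintegral_meas_ofReal_lt _ hmeas]
  refine lintegral_congr fun s => ?_
  rw [← volume_restrict_Ioi_setOf_ofReal_lt (min _ _),
    Measure.restrict_apply (measurableSet_lt measurable_const hmeas),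
    Measure.restrict_apply (measurableSet_lt ENNReal.measurable_ofReal measurable_const)]
  congr 1
  ext u
  simp only [mem_inter_iff, mem_ofPred_eq, mem_Ioo, mem_Ioi, lt_rearr_iff, lt_min_iff,
    ENNReal.ofReal_lt_ofReal_iff']
  grind

theorem lintegral_Ioi_distrib_eq {f : E → ℂ} (hf : Measurable f) {a : ℝ} (ha : 0 ≤ a) :
    ∫⁻ s in Ioi a, distrib μ f (ENNReal.ofReal s) = ∫⁻ x, (‖f x‖ₑ - ENNReal.ofReal a) ∂μ := by
  have hshift : ∫⁻ s in Ioi a, distrib μ f (ENNReal.ofReal s)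
      = ∫⁻ s in Ioi 0, distrib μ f (ENNReal.ofReal (s + a)) := by
    rw [← (measurePreserving_add_right volume a).setLIntegral_comp_preimage_emb
      (measurableEmbedding_addRight a), preimage_add_const_Ioi, sub_self]
  have hlevel : ∀ s ∈ Ioi (0 : ℝ),
      distrib μ f (ENNReal.ofReal (s + a)) = μ {x | s < max (‖f x‖ - a) 0} := by
    intro s hs
    change μ {x | ENNReal.ofReal (s + a) < ‖f x‖ₑ} = _
    congr 1
    ext x
    rw [mem_ofPred_eq, mem_ofPred_eq, ← ofReal_norm, ENNReal.ofReal_lt_ofReal_iff', lt_max_iff]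
    have := mem_Ioi.mp hs
    constructor
    · intro h; left; linarith [h.1]
    · rintro (h | h) <;> exact ⟨by linarith, by linarith⟩
  rw [hshift, setLIntegral_congr_fun measurableSet_Ioi hlevel,
    ← lintegral_eq_lintegral_meas_lt μ (Eventually.of_forall fun x => le_max_right _ 0)
      ((hf.norm.sub_const a).max measurable_const).aemeasurable]
  refine lintegral_congr fun x => ?_
  rw [ENNReal.ofReal_max, ENNReal.ofReal_sub _ ha, ofReal_norm, ENNReal.ofReal_zero, max_zero]

theorem setLIntegral_rearr_le {f : E → ℂ} (hf : Measurable f) (t : ℝ) {lam : ℝ} (hlam : 0 ≤ lam) :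
    ∫⁻ u in Ioo 0 t, rearr μ f (ENNReal.ofReal u)
      ≤ ENNReal.ofReal lam * ENNReal.ofReal t + ∫⁻ x, (‖f x‖ₑ - ENNReal.ofReal lam) ∂μ := by
  rw [setLIntegral_rearr_eq_lintegral_min_distrib, ← lintegral_Ioi_distrib_eq μ hf hlam]
  exact lintegral_Ioi_min_le _ _ hlam

theorem setLIntegral_rearr_eq {f : E → ℂ} (hf : Measurable f) {t : ℝ}
    (hfin : rearr μ f (ENNReal.ofReal t) ≠ ∞) :
    ∫⁻ u in Ioo 0 t, rearr μ f (ENNReal.ofReal u)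
      = rearr μ f (ENNReal.ofReal t) * ENNReal.ofReal t
        + ∫⁻ x, (‖f x‖ₑ - rearr μ f (ENNReal.ofReal t)) ∂μ := by
  set lam := (rearr μ f (ENNReal.ofReal t)).toReal
  have hlam : ENNReal.ofReal lam = rearr μ f (ENNReal.ofReal t) := ENNReal.ofReal_toReal hfin
  rw [setLIntegral_rearr_eq_lintegral_min_distrib, ← hlam,
    ← lintegral_Ioi_distrib_eq μ hf ENNReal.toReal_nonneg]
  refine lintegral_Ioi_min_eq _ _ ENNReal.toReal_nonneg (fun s hs => ?_) (fun s hs => ?_)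
  · refine ((lt_rearr_iff μ f).mp ?_).le
    rw [← hlam]
    exact (ENNReal.ofReal_lt_ofReal_iff_of_nonneg hs.1.le).mpr hs.2
  · refine (rearr_le_iff μ f).mp ?_
    rw [← hlam]
    exact ENNReal.ofReal_le_ofReal (mem_Ioi.mp hs).le

lemma rearr_mul_le_setLIntegral_rearr (f : E → ℂ) (t : ℝ) :
    rearr μ f (ENNReal.ofReal t) * ENNReal.ofReal t
      ≤ ∫⁻ u in Ioo 0 t, rearr μ f (ENNReal.ofReal u) := by
  calc rearr μ f (ENNReal.ofReal t) * ENNReal.ofReal t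
      = ∫⁻ _ in Ioo 0 t, rearr μ f (ENNReal.ofReal t) := by
        rw [setLIntegral_const, Real.volume_Ioo, sub_zero]
    _ ≤ _ := setLIntegral_mono' measurableSet_Ioo fun u hu =>
        rearr_antitone μ f (ENNReal.ofReal_le_ofReal hu.2.le)

theorem setLIntegral_rearr_add_le {f g : E → ℂ} (hf : Measurable f) (hg : Measurable g) {t : ℝ}
    (ht : 0 < t) :
    ∫⁻ u in Ioo 0 t, rearr μ (f + g) (ENNReal.ofReal u)
      ≤ (∫⁻ u in Ioo 0 t, rearr μ f (ENNReal.ofReal u))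
        + ∫⁻ u in Ioo 0 t, rearr μ g (ENNReal.ofReal u) := by
  have htop_of_rearr_eq_top : ∀ h : E → ℂ, rearr μ h (ENNReal.ofReal t) = ∞ →
      ∫⁻ u in Ioo 0 t, rearr μ h (ENNReal.ofReal u) = ∞ := fun h hh =>
    top_le_iff.mp <| by
      simpa [hh, ENNReal.top_mul (ENNReal.ofReal_pos.mpr ht).ne']
        using rearr_mul_le_setLIntegral_rearr μ h t
  rcases eq_or_ne (rearr μ f (ENNReal.ofReal t)) ∞ with hf_top | hf_fin
  · rw [htop_of_rearr_eq_top f hf_top, top_add]; exact le_top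
  rcases eq_or_ne (rearr μ g (ENNReal.ofReal t)) ∞ with hg_top | hg_fin
  · rw [htop_of_rearr_eq_top g hg_top, add_top]; exact le_top
  set a := rearr μ f (ENNReal.ofReal t)
  set b := rearr μ g (ENNReal.ofReal t)
  have htail : ∀ x, ‖(f + g) x‖ₑ - (a + b) ≤ (‖f x‖ₑ - a) + (‖g x‖ₑ - b) := fun x =>
    (tsub_le_tsub_right (enorm_add_le _ _) _).trans add_tsub_add_le_tsub_add_tsub
  calc ∫⁻ u in Ioo 0 t, rearr μ (f + g) (ENNReal.ofReal u)
      ≤ (a + b) * ENNReal.ofReal t + ∫⁻ x, (‖(f + g) x‖ₑ - (a + b)) ∂μ := by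
        simpa [ENNReal.ofReal_add, ENNReal.ofReal_toReal, hf_fin, hg_fin] using
          setLIntegral_rearr_le μ (hf.add hg) t (lam := a.toReal + b.toReal) (by positivity)
    _ ≤ (a * ENNReal.ofReal t + ∫⁻ x, (‖f x‖ₑ - a) ∂μ)
        + (b * ENNReal.ofReal t + ∫⁻ x, (‖g x‖ₑ - b) ∂μ) := by
        rw [add_mul, add_add_add_comm,
          ← lintegral_add_left (f := fun x => ‖f x‖ₑ - a) (by fun_prop)]
        gcongr with x
        exact htail x
    _ = _ := congrArg₂ (· + ·) (setLIntegral_rearr_eq μ hf hf_fin).symm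
        (setLIntegral_rearr_eq μ hg hg_fin).symm

lemma maxRearr_add_le {f g : E → ℂ} (hf : Measurable f) (hg : Measurable g) {t : ℝ} (ht : 0 < t) :
    maxRearr μ (f + g) t ≤ maxRearr μ f t + maxRearr μ g t := by
  rw [maxRearr, maxRearr, maxRearr, ENNReal.div_add_div_same]
  exact ENNReal.div_le_div_right (setLIntegral_rearr_add_le μ hf hg ht) _

@[fun_prop]
lemma measurable_maxRearr (f : E → ℂ) : Measurable (maxRearr μ f) := by
  have hmono : Monotone fun t : ℝ => ∫⁻ u in Ioo 0 t, rearr μ f (ENNReal.ofReal u) :=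
    fun _ _ h => lintegral_mono_set (Ioo_subset_Ioo le_rfl h)
  exact hmono.measurable.div ENNReal.measurable_ofReal

end Rearrangement

theorem lorentzN_triangle_general {E : Type*} [MeasurableSpace E] (μ : Measure E)
    (p q : ℝ≥0∞) (hq : 1 ≤ q)
    (f g : E → ℂ) (hf : Measurable f) (hg : Measurable g) :
    lorentzN μ (f + g) p q ≤ lorentzN μ f p q + lorentzN μ g p q := by
  have hweighted : ∀ t > 0, ENNReal.ofReal t ^ p⁻¹.toReal * maxRearr μ (f + g) t
      ≤ ENNReal.ofReal t ^ p⁻¹.toReal * maxRearr μ f t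
        + ENNReal.ofReal t ^ p⁻¹.toReal * maxRearr μ g t := fun t ht => by
    rw [← mul_add]
    exact mul_le_mul_right (maxRearr_add_le μ hf hg ht) _
  unfold lorentzN
  split_ifs with hq_top
  · exact iSup₂_le fun t ht => (hweighted t ht).trans
      (add_le_add (le_iSup₂_of_le t ht le_rfl) (le_iSup₂_of_le t ht le_rfl))
  · refine lintegral_Ioi_rpow_div_le_add ?_ (by fun_prop) (by fun_prop) hweighted
    simpa using ENNReal.toReal_mono hq_top hq

/-- For `1 < p ≤ ∞` and `1 ≤ q ≤ ∞`, the functional `‖·‖_{p,q}` built from the maximal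
rearrangement `f**` satisfies the triangle inequality:
`‖f + g‖_{p,q} ≤ ‖f‖_{p,q} + ‖g‖_{p,q}`. -/
theorem lorentzN_triangle {E : Type*} [MeasurableSpace E] (μ : Measure E)
    [SigmaFinite μ] [NullSingletonClass μ] (p q : ℝ≥0∞) (hp : 1 < p) (hq : 1 ≤ q)
    (f g : E → ℂ) (hf : Measurable f) (hg : Measurable g) :
    lorentzN μ (f + g) p q ≤ lorentzN μ f p q + lorentzN μ g p q :=
  lorentzN_triangle_general μ p q hq f g hf hg
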